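/- arXiv:1210.2319 — 4 statements merged into one kernel-verified Lean document; each statement's English description precedes it below -/
import Mathlib

section
/- Let B be a function from the set of prime numbers to [−1,1] that is μ-equidistributed with respect to the Sato–Tate measure μ, and let ε be a real-valued function on the primes with ε(p) → 0 as p → ∞. Then liminf_{x→∞} #{p ≤ x prime : B(p) > ε(p)}/π(x) ≥ 1/2. -/
open Filter Set

/-- The number of primes `p ≤ x` belonging to the set `S`. -/
noncomputable def primesCount (S : Set ℕ) (x : ℝ) : ℕ :=
  Nat.card {p : ℕ | p.Prime ∧ p ∈ S ∧ (p : ℝ) ≤ x}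

/-- The prime counting function `π(x)`. -/
noncomputable def primePi (x : ℝ) : ℕ := primesCount Set.univ x

/-- `S` has Dirichlet density `δ`. -/
def HasDirichletDensity (S : Set ℕ) (δ : ℝ) : Prop :=
  Tendsto (fun z : ℝ => (∑' p : S, ((p : ℕ) : ℝ) ^ (-z)) / Real.log (1 / (z - 1)))
    (nhdsWithin 1 (Set.Ioi 1)) (nhds δ)

/-- `S` is a regular set of primes of Dirichlet density `δ`. -/
def IsRegularPrimeSet (S : Set ℕ) (δ : ℝ) : Prop :=
  HasDirichletDensity S δ ∧
  ∃ (U : Set ℂ) (g : ℂ → ℂ), IsOpen U ∧ {z : ℂ | 1 ≤ z.re} ⊆ U ∧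
    DifferentiableOn ℂ g U ∧
    ∀ z : ℂ, 1 < z.re →
      (∑' p : S, ((p : ℕ) : ℂ) ^ (-z)) = (δ : ℂ) * Complex.log (1 / (z - 1)) + g z

/-- `S` has natural density `d` within the primes. -/
def HasNaturalPrimeDensity (S : Set ℕ) (d : ℝ) : Prop :=
  Tendsto (fun x : ℝ => (primesCount S x : ℝ) / (primePi x : ℝ)) atTop (nhds d)

/-- The Sato–Tate measure of the interval `[a,b]`. -/
noncomputable def stMeasure (a b : ℝ) : ℝ :=
  (2 / Real.pi) * ∫ t in a..b, Real.sqrt (1 - t ^ 2)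

/-- `B` is equidistributed with respect to the Sato–Tate measure on the primes. -/
def IsSatoTateEquidistributed (B : ℕ → ℝ) : Prop :=
  ∀ a b : ℝ, -1 ≤ a → a ≤ b → b ≤ 1 →
    Tendsto (fun x : ℝ => (primesCount {p | B p ∈ Set.Icc a b} x : ℝ) / (primePi x : ℝ))
      atTop (nhds (stMeasure a b))

/-- `A ⊆ ℕ` has Dedekind–Dirichlet density `δ`. -/
def HasDedekindDirichletDensity (A : Set ℕ) (δ : ℝ) : Prop :=
  Tendsto (fun z : ℝ => (z - 1) * ∑' n : A, ((n : ℕ) : ℝ) ^ (-z))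
    (nhdsWithin 1 (Set.Ioi 1)) (nhds δ)

open Topology

/-!
Fix `t > 0`. Eventually `ε p < t`, so apart from finitely many primes every prime with
`B p ∈ [t, 1]` satisfies `ε p < B p`; finitely many primes do not affect densities, hence the
liminf is at least `μ([t, 1])`. As `t → 0⁺`, `μ([t, 1]) → μ([0, 1]) = 1/2` since the Sato–Tate
density is even.
-/

lemma finite_setOf_prime_le (S : Set ℕ) (x : ℝ) :
    {p : ℕ | p.Prime ∧ p ∈ S ∧ (p : ℝ) ≤ x}.Finite :=
  (finite_Iic ⌈x⌉₊).subset fun p hp => by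
    exact_mod_cast hp.2.2.trans (Nat.le_ceil x)

lemma primesCount_le_primePi (S : Set ℕ) (x : ℝ) : primesCount S x ≤ primePi x :=
  Nat.card_mono (finite_setOf_prime_le _ _) fun _ hp => ⟨hp.1, trivial, hp.2.2⟩

lemma primesCount_le_add_of_subset {S T : Set ℕ} {N : ℕ}
    (hST : ∀ p, N ≤ p → p.Prime → p ∈ S → p ∈ T) (x : ℝ) :
    primesCount S x ≤ primesCount T x + N := by
  have hsub : {p : ℕ | p.Prime ∧ p ∈ S ∧ (p : ℝ) ≤ x} ⊆
      {p : ℕ | p.Prime ∧ p ∈ T ∧ (p : ℝ) ≤ x} ∪ Iio N := fun p ⟨hp, hpS, hpx⟩ =>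
    (lt_or_ge p N).elim Or.inr fun hNp => Or.inl ⟨hp, hST p hNp hp hpS, hpx⟩
  simp only [primesCount, Nat.card_coe_set_eq]
  calc _ ≤ _ := ncard_le_ncard hsub ((finite_setOf_prime_le _ _).union (finite_Iio N))
    _ ≤ _ := ncard_union_le _ _
    _ = _ := by rw [ncard_Iio_nat]

lemma primePi_eq_primeCounting {x : ℝ} (hx : 0 ≤ x) : primePi x = Nat.primeCounting ⌊x⌋₊ := by
  have hset : {p : ℕ | p.Prime ∧ p ∈ (univ : Set ℕ) ∧ (p : ℝ) ≤ x} = ↑(Nat.primesLE ⌊x⌋₊) := by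
    ext p
    simp [Nat.mem_primesLE, Nat.le_floor_iff hx, and_comm]
  rw [primePi, primesCount, hset, Nat.card_coe_set_eq, ncard_coe_finset,
    Nat.primesLE_card_eq_primeCounting]

lemma tendsto_primePi_atTop : Tendsto (fun x : ℝ => primePi x) atTop atTop :=
  (Nat.tendsto_primeCounting.comp tendsto_nat_floor_atTop).congr' <|
    (eventually_ge_atTop 0).mono fun _ hx => (primePi_eq_primeCounting hx).symm

lemma HasNaturalPrimeDensity.le_liminf {S T : Set ℕ} {d : ℝ} (hS : HasNaturalPrimeDensity S d)
    (hST : ∀ᶠ p in atTop, p.Prime → p ∈ S → p ∈ T) :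
    d ≤ liminf (fun x : ℝ => (primesCount T x : ℝ) / primePi x) atTop := by
  obtain ⟨N, hN⟩ := eventually_atTop.mp hST
  have hπ : Tendsto (fun x : ℝ => (primePi x : ℝ)) atTop atTop :=
    tendsto_natCast_atTop_atTop.comp tendsto_primePi_atTop
  have hlower : Tendsto (fun x : ℝ => (primesCount S x : ℝ) / primePi x - N / primePi x)
      atTop (𝓝 d) := by
    simpa using hS.sub (tendsto_const_nhds.div_atTop hπ)
  have hle : ∀ x : ℝ, (primesCount S x : ℝ) / primePi x - N / primePi x ≤
      (primesCount T x : ℝ) / primePi x := by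
    intro x
    rw [← sub_div]
    gcongr
    have := primesCount_le_add_of_subset hN x
    rw [sub_le_iff_le_add]
    exact_mod_cast this
  have hbdd : IsBoundedUnder (· ≤ ·) atTop fun x : ℝ => (primesCount T x : ℝ) / primePi x :=
    isBoundedUnder_of ⟨1, fun x =>
      div_le_one_of_le₀ (by exact_mod_cast primesCount_le_primePi T x) (Nat.cast_nonneg _)⟩
  calc d = liminf _ atTop := hlower.liminf_eq.symm
    _ ≤ _ := liminf_le_liminf (Eventually.of_forall hle) hlower.isBoundedUnder_ge
      hbdd.isCoboundedUnder_ge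

lemma intervalIntegrable_sqrt_one_sub_sq (a b : ℝ) :
    IntervalIntegrable (fun t : ℝ => √(1 - t ^ 2)) MeasureTheory.volume a b :=
  (by fun_prop : Continuous fun t : ℝ => √(1 - t ^ 2)).intervalIntegrable a b

lemma stMeasure_zero_one : stMeasure 0 1 = 1 / 2 := by
  have heven : ∫ t in (-1 : ℝ)..0, √(1 - t ^ 2) = ∫ t in (0 : ℝ)..1, √(1 - t ^ 2) := by
    have hneg := intervalIntegral.integral_comp_neg (a := 0) (b := 1) fun t : ℝ => √(1 - t ^ 2)
    simp only [neg_sq, neg_zero] at hneg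
    exact hneg.symm
  have hsplit := intervalIntegral.integral_add_adjacent_intervals
    (intervalIntegrable_sqrt_one_sub_sq (-1) 0) (intervalIntegrable_sqrt_one_sub_sq 0 1)
  rw [integral_sqrt_one_sub_sq, heven] at hsplit
  rw [stMeasure, show ∫ t in (0 : ℝ)..1, √(1 - t ^ 2) = Real.pi / 4 by linarith]
  field_simp
  norm_num

lemma continuous_stMeasure_left (b : ℝ) : Continuous fun a => stMeasure a b := by
  simp_rw [stMeasure, intervalIntegral.integral_symm b]
  exact continuous_const.mul
    (intervalIntegral.continuous_primitive intervalIntegrable_sqrt_one_sub_sq b).neg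

theorem liminf_count_gt_ge_half_general (B ε : ℕ → ℝ)
    (hequi : IsSatoTateEquidistributed B)
    (hε : Tendsto ε (atTop ⊓ Filter.principal {p : ℕ | p.Prime}) (nhds 0)) :
    (1 / 2 : ℝ) ≤ Filter.liminf
      (fun x : ℝ => (primesCount {p : ℕ | p.Prime ∧ ε p < B p} x : ℝ) / (primePi x : ℝ))
      atTop := by
  have hdensity : ∀ t ∈ Ioc (0 : ℝ) 1, stMeasure t 1 ≤ liminf
      (fun x : ℝ => (primesCount {p : ℕ | p.Prime ∧ ε p < B p} x : ℝ) / primePi x) atTop := by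
    rintro t ⟨ht0, ht1⟩
    refine HasNaturalPrimeDensity.le_liminf (S := {p | B p ∈ Icc t 1})
      (hequi t 1 (by linarith) ht1 le_rfl) ?_
    filter_upwards [eventually_inf_principal.mp (hε.eventually_lt_const ht0)]
      with p hεp hp hBp
    exact ⟨hp, (hεp hp).trans_le hBp.1⟩
  have hlim : Tendsto (fun t => stMeasure t 1) (𝓝[>] 0) (𝓝 (1 / 2)) :=
    stMeasure_zero_one ▸ ((continuous_stMeasure_left 1).tendsto 0).mono_left nhdsWithin_le_nhds
  exact le_of_tendsto hlim (mem_of_superset (Ioc_mem_nhdsGT zero_lt_one) hdensity)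

/-- Key step in the proof of Theorem 4.1: if `B` is Sato–Tate equidistributed on the
primes and `ε(p) → 0` as `p → ∞` along the primes, then
`liminf_{x → ∞} #{p ≤ x prime : B(p) > ε(p)} / π(x) ≥ 1/2`. -/
theorem liminf_count_gt_ge_half (B ε : ℕ → ℝ)
    (hB : ∀ p : ℕ, p.Prime → B p ∈ Set.Icc (-1 : ℝ) 1)
    (hequi : IsSatoTateEquidistributed B)
    (hε : Tendsto ε (atTop ⊓ Filter.principal {p : ℕ | p.Prime}) (nhds 0)) :
    (1 / 2 : ℝ) ≤ Filter.liminf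
      (fun x : ℝ => (primesCount {p : ℕ | p.Prime ∧ ε p < B p} x : ℝ) / (primePi x : ℝ))
      atTop :=
  liminf_count_gt_ge_half_general B ε hequi hε
end

section
/- Let s : ℕ → ℝ be a multiplicative arithmetic function taking values in {−1, 0, 1}. Suppose that {p prime : s(p) = 1} and {p prime : s(p) = −1} are regular sets of primes, each of Dirichlet density 1/2, and that {p prime : s(p) = 0} is a regular set of primes of Dirichlet density 0. Then the sets {n ∈ ℕ : s(n) = 1} and {n ∈ ℕ : s(n) = −1} have equal positive Dedekind–Dirichlet densities; more precisely, each has Dedekind–Dirichlet density equal to half of the Dedekind–Dirichlet density of the set {n ∈ ℕ : s(n) ≠ 0}, which exists and is positive. -/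
open Filter Set

/-!
Put `F(z) = ∑ |s n| n^{-z}` (the Dirichlet series of `{n | s n ≠ 0}`) and `G(z) = ∑ s n n^{-z}`;
the sets `{n | s n = ±1}` have Dirichlet series `(F ± G) / 2`, so it suffices that `(z - 1) F(z)`
tends to a positive limit and `(z - 1) G(z)` tends to `0` as `z → 1⁺`. Both series have Euler
products, whose factors at `p` have logarithm `|s p| p^{-z} + O(p^{-2})`, resp. at most
`s p p^{-z} + O(p^{-2})`. Regularity of `{p | s p = ±1}` gives `∑_{s(p) = ±1} p^{-z} = ½ log (1/(z-1)) + c_± + o(1)`. Hence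
`log F(z) = log (1/(z-1)) + c₊ + c₋ + D(1) + o(1)`, where the remainder `D` is continuous at `1`
because `|s|` is nonnegative, while `log G(z) ≤ c₊ - c₋ + O(1)` stays bounded above.
-/

open Topology

noncomputable def powerTail (a : ℕ → ℝ) (q : ℝ) : ℝ := ∑' e, a e * q ^ (e + 1)

section PowerTail

variable {a : ℕ → ℝ} {q : ℝ}

lemma abs_mul_pow_add_le (ha : ∀ e, |a e| ≤ 1) (hq0 : 0 ≤ q) (k e : ℕ) :
    ‖a e * q ^ (e + k)‖ ≤ q ^ k * q ^ e := by
  rw [Real.norm_eq_abs, pow_add, mul_comm (q ^ e), abs_mul,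
    abs_of_nonneg (by positivity : 0 ≤ q ^ k * q ^ e)]
  exact mul_le_of_le_one_left (by positivity) (ha e)

lemma summable_mul_pow_add (ha : ∀ e, |a e| ≤ 1) (hq0 : 0 ≤ q) (hq1 : q < 1) (k : ℕ) :
    Summable fun e => a e * q ^ (e + k) :=
  .of_norm_bounded ((summable_geometric_of_lt_one hq0 hq1).mul_left _)
    (abs_mul_pow_add_le ha hq0 k)

lemma abs_tsum_mul_pow_add_le (ha : ∀ e, |a e| ≤ 1) (hq0 : 0 ≤ q) (hq : q ≤ 1 / 2) (k : ℕ) :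
    |∑' e, a e * q ^ (e + k)| ≤ 2 * q ^ k := by
  have hgeom : HasSum (fun e => q ^ k * q ^ e) (q ^ k * (1 - q)⁻¹) :=
    (hasSum_geometric_of_lt_one hq0 (by linarith)).mul_left _
  have hinv : (1 - q)⁻¹ ≤ 2 := by
    rw [inv_le_comm₀ (by linarith) two_pos]
    linarith
  calc |∑' e, a e * q ^ (e + k)| ≤ q ^ k * (1 - q)⁻¹ :=
        tsum_of_norm_bounded hgeom (abs_mul_pow_add_le ha hq0 k)
    _ ≤ q ^ k * 2 := by gcongr
    _ = 2 * q ^ k := mul_comm _ _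

lemma abs_powerTail_le (ha : ∀ e, |a e| ≤ 1) (hq0 : 0 ≤ q) (hq : q ≤ 1 / 2) :
    |powerTail a q| ≤ 2 * q := by
  simpa [powerTail] using abs_tsum_mul_pow_add_le ha hq0 hq 1

lemma abs_powerTail_sub_le (ha : ∀ e, |a e| ≤ 1) (hq0 : 0 ≤ q) (hq : q ≤ 1 / 2) :
    |powerTail a q - a 0 * q| ≤ 2 * q ^ 2 := by
  rw [powerTail, (summable_mul_pow_add ha hq0 (by linarith) 1).tsum_eq_zero_add]
  simpa [add_assoc] using abs_tsum_mul_pow_add_le (fun e => ha (e + 1)) hq0 hq 2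

lemma powerTail_nonneg (ha0 : ∀ e, 0 ≤ a e) (hq0 : 0 ≤ q) : 0 ≤ powerTail a q :=
  tsum_nonneg fun e => mul_nonneg (ha0 e) (pow_nonneg hq0 _)

lemma continuousOn_powerTail (ha : ∀ e, |a e| ≤ 1) :
    ContinuousOn (powerTail a) (Set.Icc 0 (1 / 2)) := by
  refine continuousOn_tsum (u := fun e => (1 / 2 : ℝ) ^ (e + 1)) (fun e => by fun_prop)
    ((summable_nat_add_iff 1).mpr summable_geometric_two) fun e q hq => ?_
  calc ‖a e * q ^ (e + 1)‖ ≤ q ^ 1 * q ^ e := abs_mul_pow_add_le ha hq.1 1 e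
    _ = q ^ (e + 1) := by ring
    _ ≤ (1 / 2) ^ (e + 1) := pow_le_pow_left₀ hq.1 hq.2 _

lemma log_one_add_powerTail_le (ha : ∀ e, |a e| ≤ 1) (hq0 : 0 ≤ q) (hq : q < 1 / 2) :
    Real.log (1 + powerTail a q) ≤ a 0 * q + 2 * q ^ 2 := by
  have hbound := abs_powerTail_le ha hq0 hq.le
  have hsub := abs_powerTail_sub_le ha hq0 hq.le
  have hlog := Real.log_le_sub_one_of_pos (x := 1 + powerTail a q)
    (by linarith [neg_abs_le (powerTail a q)])
  linarith [le_abs_self (powerTail a q - a 0 * q)]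

lemma sub_sq_div_two_le_log_one_add {x : ℝ} (hx : 0 ≤ x) : x - x ^ 2 / 2 ≤ Real.log (1 + x) := by
  refine le_trans ?_ (Real.le_log_one_add_of_nonneg hx)
  rw [le_div_iff₀ (by linarith)]
  nlinarith [pow_nonneg hx 3]

lemma abs_log_one_add_powerTail_sub_le (ha : ∀ e, |a e| ≤ 1) (ha0 : ∀ e, 0 ≤ a e)
    (hq0 : 0 ≤ q) (hq : q ≤ 1 / 2) :
    |Real.log (1 + powerTail a q) - a 0 * q| ≤ 4 * q ^ 2 := by
  have hnonneg := powerTail_nonneg ha0 hq0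
  have hbound := abs_powerTail_le ha hq0 hq
  rw [abs_of_nonneg hnonneg] at hbound
  have hsub := abs_powerTail_sub_le ha hq0 hq
  have hlower := sub_sq_div_two_le_log_one_add hnonneg
  have hupper := Real.log_le_sub_one_of_pos (x := 1 + powerTail a q) (by linarith)
  have hsq : powerTail a q ^ 2 ≤ 4 * q ^ 2 := by nlinarith
  rw [abs_le] at hsub ⊢
  constructor <;> linarith [hsub.1, hsub.2]

end PowerTail

lemma rpow_neg_le_inv {x z : ℝ} (hx : 1 ≤ x) (hz : 1 ≤ z) : x ^ (-z) ≤ x⁻¹ := by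
  rw [← Real.rpow_neg_one]
  exact Real.rpow_le_rpow_of_exponent_le hx (by linarith)

namespace Nat.Primes

variable (p : Nat.Primes) {z : ℝ}

lemma one_lt_cast : (1 : ℝ) < (p : ℕ) := by exact_mod_cast p.2.one_lt

lemma rpow_neg_nonneg : 0 ≤ ((p : ℕ) : ℝ) ^ (-z) := Real.rpow_nonneg (Nat.cast_nonneg _) _

lemma rpow_neg_le_half (hz : 1 ≤ z) : ((p : ℕ) : ℝ) ^ (-z) ≤ 1 / 2 := by
  refine (rpow_neg_le_inv p.one_lt_cast.le hz).trans ?_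
  rw [one_div]
  exact inv_anti₀ two_pos (by exact_mod_cast p.2.two_le)

lemma rpow_neg_lt_half (hz : 1 < z) : ((p : ℕ) : ℝ) ^ (-z) < 1 / 2 :=
  (Real.rpow_lt_rpow_of_exponent_lt p.one_lt_cast (neg_lt_neg hz)).trans_le
    (p.rpow_neg_le_half le_rfl)

lemma sq_rpow_neg_le (hz : 1 ≤ z) : (((p : ℕ) : ℝ) ^ (-z)) ^ 2 ≤ (((p : ℕ) : ℝ) ^ 2)⁻¹ := by
  rw [← inv_pow]
  exact pow_le_pow_left₀ p.rpow_neg_nonneg (rpow_neg_le_inv p.one_lt_cast.le hz) 2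

end Nat.Primes

lemma summable_primes_rpow_neg {z : ℝ} (hz : 1 < z) :
    Summable fun p : Nat.Primes => ((p : ℕ) : ℝ) ^ (-z) :=
  (Real.summable_nat_rpow.mpr (neg_lt_neg hz)).comp_injective Nat.Primes.coe_nat_injective

lemma summable_primes_inv_sq : Summable fun p : Nat.Primes => (((p : ℕ) : ℝ) ^ 2)⁻¹ :=
  (Real.summable_nat_pow_inv.mpr one_lt_two).comp_injective Nat.Primes.coe_nat_injective

lemma summable_primes_mul_rpow_neg {u : ℕ → ℝ} {z : ℝ} (hu : ∀ n, |u n| ≤ 1) (hz : 1 < z) :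
    Summable fun p : Nat.Primes => u p * ((p : ℕ) : ℝ) ^ (-z) :=
  .of_norm_bounded (summable_primes_rpow_neg hz) fun p => by
    rw [Real.norm_eq_abs, abs_mul, abs_of_nonneg p.rpow_neg_nonneg]
    exact mul_le_of_le_one_left p.rpow_neg_nonneg (hu p)

noncomputable def eulerTail (u : ℕ → ℝ) (z : ℝ) (p : ℕ) : ℝ :=
  powerTail (fun e => u (p ^ (e + 1))) ((p : ℝ) ^ (-z))

section EulerTail

variable {u : ℕ → ℝ} {z : ℝ}

lemma abs_eulerTail_le (hu : ∀ n, |u n| ≤ 1) (p : Nat.Primes) (hz : 1 ≤ z) :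
    |eulerTail u z p| ≤ 2 * ((p : ℕ) : ℝ) ^ (-z) :=
  abs_powerTail_le (fun _ => hu _) p.rpow_neg_nonneg (p.rpow_neg_le_half hz)

lemma one_add_eulerTail_pos (hu : ∀ n, |u n| ≤ 1) (p : Nat.Primes) (hz : 1 < z) :
    0 < 1 + eulerTail u z p := by
  linarith [neg_abs_le (eulerTail u z p), abs_eulerTail_le hu p hz.le, p.rpow_neg_lt_half hz]

lemma summable_eulerTail (hu : ∀ n, |u n| ≤ 1) (hz : 1 < z) :
    Summable fun p : Nat.Primes => eulerTail u z p :=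
  .of_norm_bounded ((summable_primes_rpow_neg hz).mul_left 2)
    fun p => abs_eulerTail_le hu p hz.le

lemma tsum_eulerFactor (hu : ∀ n, |u n| ≤ 1) (hu1 : u 1 = 1) (p : Nat.Primes) (hz : 1 ≤ z) :
    ∑' e, u ((p : ℕ) ^ e) * (((p : ℕ) ^ e : ℕ) : ℝ) ^ (-z) = 1 + eulerTail u z p := by
  have hpow (e : ℕ) : (((p : ℕ) ^ e : ℕ) : ℝ) ^ (-z) = (((p : ℕ) : ℝ) ^ (-z)) ^ e := by
    rw [Nat.cast_pow, Real.rpow_pow_comm (Nat.cast_nonneg _)]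
  simp_rw [hpow]
  have hsum : Summable fun e => u ((p : ℕ) ^ e) * (((p : ℕ) : ℝ) ^ (-z)) ^ e := by
    simpa using summable_mul_pow_add (fun _ => hu _) p.rpow_neg_nonneg
      ((p.rpow_neg_le_half hz).trans_lt one_half_lt_one) 0
  rw [hsum.tsum_eq_zero_add]
  simp [hu1, eulerTail, powerTail]

lemma log_one_add_eulerTail_le (hu : ∀ n, |u n| ≤ 1) (p : Nat.Primes) (hz : 1 < z) :
    Real.log (1 + eulerTail u z p) ≤ u p * ((p : ℕ) : ℝ) ^ (-z) + 2 * (((p : ℕ) : ℝ) ^ 2)⁻¹ := by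
  have h := log_one_add_powerTail_le (a := fun e => u ((p : ℕ) ^ (e + 1))) (fun _ => hu _)
    p.rpow_neg_nonneg (p.rpow_neg_lt_half hz)
  simp only [zero_add, pow_one] at h
  rw [eulerTail]
  linarith [p.sq_rpow_neg_le hz.le]

lemma abs_log_one_add_eulerTail_sub_le (hu : ∀ n, |u n| ≤ 1) (hu0 : ∀ n, 0 ≤ u n)
    (p : Nat.Primes) (hz : 1 ≤ z) :
    |Real.log (1 + eulerTail u z p) - u p * ((p : ℕ) : ℝ) ^ (-z)| ≤
      4 * (((p : ℕ) : ℝ) ^ 2)⁻¹ := by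
  have h := abs_log_one_add_powerTail_sub_le (a := fun e => u ((p : ℕ) ^ (e + 1)))
    (fun _ => hu _) (fun _ => hu0 _) p.rpow_neg_nonneg (p.rpow_neg_le_half hz)
  simp only [zero_add, pow_one] at h
  rw [eulerTail]
  linarith [p.sq_rpow_neg_le hz]

end EulerTail

section EulerProduct

variable {u : ℕ → ℝ} {z : ℝ}

theorem tsum_mul_rpow_neg_eq_exp (hu1 : u 1 = 1)
    (hmul : ∀ m n : ℕ, Nat.Coprime m n → u (m * n) = u m * u n) (hu : ∀ n, |u n| ≤ 1)
    (hz : 1 < z) :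
    ∑' n, u n * (n : ℝ) ^ (-z) = Real.exp (∑' p : Nat.Primes, Real.log (1 + eulerTail u z p)) := by
  have hsum : Summable fun n => ‖u n * (n : ℝ) ^ (-z)‖ := by
    refine .of_nonneg_of_le (fun n => norm_nonneg _) (fun n => ?_)
      (Real.summable_nat_rpow.mpr (neg_lt_neg hz))
    have h0 : (0 : ℝ) ≤ (n : ℝ) ^ (-z) := Real.rpow_nonneg (Nat.cast_nonneg n) _
    rw [Real.norm_eq_abs, abs_mul, abs_of_nonneg h0]
    exact mul_le_of_le_one_left h0 (hu n)
  have hprod := EulerProduct.eulerProduct_hasProd (f := fun n => u n * (n : ℝ) ^ (-z))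
    (by simp [hu1]) (fun {m n} hmn => by
      simp only [hmul m n hmn, Nat.cast_mul, Real.mul_rpow (Nat.cast_nonneg m) (Nat.cast_nonneg n)]
      ring)
    hsum (by simp [Real.zero_rpow (neg_ne_zero.mpr (by linarith : z ≠ 0))])
  simp only [tsum_eulerFactor hu hu1 _ hz.le] at hprod
  exact hprod.unique (Real.hasProd_of_hasSum_log (fun p => one_add_eulerTail_pos hu p hz)
    (Real.summable_log_one_add_of_summable (summable_eulerTail hu hz)).hasSum)

noncomputable def eulerLogRemainder (u : ℕ → ℝ) (z : ℝ) : ℝ :=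
  ∑' p : Nat.Primes, (Real.log (1 + eulerTail u z p) - u p * ((p : ℕ) : ℝ) ^ (-z))

lemma tsum_log_one_add_eulerTail_eq (hu : ∀ n, |u n| ≤ 1) (hz : 1 < z) :
    ∑' p : Nat.Primes, Real.log (1 + eulerTail u z p) =
      ∑' p : Nat.Primes, u p * ((p : ℕ) : ℝ) ^ (-z) + eulerLogRemainder u z := by
  have hlin := summable_primes_mul_rpow_neg hu hz
  have hlog := Real.summable_log_one_add_of_summable (summable_eulerTail hu hz)
  rw [eulerLogRemainder, ← hlin.tsum_add (hlog.sub hlin)]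
  exact tsum_congr fun p => by ring

lemma tsum_log_one_add_eulerTail_le (hu : ∀ n, |u n| ≤ 1) (hz : 1 < z) :
    ∑' p : Nat.Primes, Real.log (1 + eulerTail u z p) ≤
      ∑' p : Nat.Primes, u p * ((p : ℕ) : ℝ) ^ (-z) +
        2 * ∑' p : Nat.Primes, (((p : ℕ) : ℝ) ^ 2)⁻¹ := by
  have hlin := summable_primes_mul_rpow_neg hu hz
  have hsq := summable_primes_inv_sq.mul_left 2
  rw [← tsum_mul_left, ← hlin.tsum_add hsq]
  exact (Real.summable_log_one_add_of_summable (summable_eulerTail hu hz)).tsum_le_tsum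
    (fun p => log_one_add_eulerTail_le hu p hz) (hlin.add hsq)

lemma continuousWithinAt_eulerLogRemainder (hu : ∀ n, |u n| ≤ 1) (hu0 : ∀ n, 0 ≤ u n) :
    ContinuousWithinAt (eulerLogRemainder u) (Set.Ici 1) 1 := by
  refine ContinuousOn.continuousWithinAt ?_ Set.self_mem_Ici
  refine continuousOn_tsum (fun p => ?_) (summable_primes_inv_sq.mul_left 4)
    fun p z hz => abs_log_one_add_eulerTail_sub_le hu hu0 p hz
  have hq : Continuous fun z : ℝ => ((p : ℕ) : ℝ) ^ (-z) :=
    (Real.continuous_const_rpow (Nat.cast_ne_zero.mpr p.2.ne_zero)).comp continuous_neg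
  have htail : ContinuousOn (fun z => eulerTail u z p) (Set.Ici 1) :=
    (continuousOn_powerTail fun _ => hu _).comp hq.continuousOn
      fun z hz => ⟨p.rpow_neg_nonneg, p.rpow_neg_le_half hz⟩
  refine ((continuousOn_const.add htail).log fun z hz => ?_).sub
    (continuousOn_const.mul hq.continuousOn)
  exact (add_pos_of_pos_of_nonneg one_pos
    (powerTail_nonneg (fun _ => hu0 _) p.rpow_neg_nonneg)).ne'

end EulerProduct

section DirichletSeries

variable {u : ℕ → ℝ}

theorem exists_pos_tendsto_mul_tsum_rpow_neg (hu1 : u 1 = 1)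
    (hmul : ∀ m n : ℕ, Nat.Coprime m n → u (m * n) = u m * u n) (hu : ∀ n, |u n| ≤ 1)
    (hu0 : ∀ n, 0 ≤ u n) {c : ℝ}
    (hc : Tendsto (fun z : ℝ => ∑' p : Nat.Primes, u p * ((p : ℕ) : ℝ) ^ (-z) -
      Real.log (1 / (z - 1))) (𝓝[>] 1) (𝓝 c)) :
    ∃ A, 0 < A ∧ Tendsto (fun z : ℝ => (z - 1) * ∑' n, u n * (n : ℝ) ^ (-z)) (𝓝[>] 1) (𝓝 A) := by
  have hrem : Tendsto (eulerLogRemainder u) (𝓝[>] 1) (𝓝 (eulerLogRemainder u 1)) :=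
    ((continuousWithinAt_eulerLogRemainder hu hu0).mono Set.Ioi_subset_Ici_self).tendsto
  refine ⟨_, Real.exp_pos (c + eulerLogRemainder u 1),
    ((Real.continuous_exp.tendsto _).comp (hc.add hrem)).congr' ?_⟩
  filter_upwards [self_mem_nhdsWithin] with z (hz : 1 < z)
  rw [Function.comp_apply, tsum_mul_rpow_neg_eq_exp hu1 hmul hu hz,
    tsum_log_one_add_eulerTail_eq hu hz, one_div, Real.log_inv, sub_neg_eq_add,
    add_comm _ (Real.log _), add_assoc, Real.exp_add, Real.exp_log (sub_pos.mpr hz)]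

/- For signed coefficients only an upper bound on the Euler factors is available: at `p = 2`,
`z = 1` the factor `1 + eulerTail u z p` may vanish. -/
theorem tendsto_mul_tsum_rpow_neg_zero (hu1 : u 1 = 1)
    (hmul : ∀ m n : ℕ, Nat.Coprime m n → u (m * n) = u m * u n) (hu : ∀ n, |u n| ≤ 1)
    {C : ℝ} (hC : ∀ᶠ z : ℝ in 𝓝[>] 1, ∑' p : Nat.Primes, u p * ((p : ℕ) : ℝ) ^ (-z) ≤ C) :
    Tendsto (fun z : ℝ => (z - 1) * ∑' n, u n * (n : ℝ) ^ (-z)) (𝓝[>] 1) (𝓝 0) := by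
  set K := ∑' p : Nat.Primes, (((p : ℕ) : ℝ) ^ 2)⁻¹
  have hlim : Tendsto (fun z : ℝ => (z - 1) * Real.exp (C + 2 * K)) (𝓝[>] 1) (𝓝 0) := by
    have h : Tendsto (fun z : ℝ => z - 1) (𝓝[>] 1) (𝓝 0) :=
      tendsto_sub_nhds_zero_iff.mpr nhdsWithin_le_nhds
    simpa using h.mul_const (Real.exp (C + 2 * K))
  refine squeeze_zero' ?_ ?_ hlim
  · filter_upwards [self_mem_nhdsWithin] with z (hz : 1 < z)
    rw [tsum_mul_rpow_neg_eq_exp hu1 hmul hu hz]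
    exact mul_nonneg (sub_nonneg.mpr hz.le) (Real.exp_pos _).le
  · filter_upwards [self_mem_nhdsWithin, hC] with z (hz : 1 < z) hCz
    rw [tsum_mul_rpow_neg_eq_exp hu1 hmul hu hz]
    have hlog := tsum_log_one_add_eulerTail_le hu hz
    gcongr
    linarith

end DirichletSeries

section SignSplitting

variable {α : Type*} {s f : α → ℝ}

lemma tsum_abs_mul_eq_tsum_ne_zero (hs : ∀ a, s a = -1 ∨ s a = 0 ∨ s a = 1) :
    ∑' a, |s a| * f a = ∑' a : {a | s a ≠ 0}, f a := by
  rw [tsum_subtype]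
  refine tsum_congr fun a => ?_
  rcases hs a with h | h | h <;> norm_num [Set.indicator, h]

lemma tsum_abs_mul_eq_add (hs : ∀ a, s a = -1 ∨ s a = 0 ∨ s a = 1) (hf : Summable f) :
    ∑' a, |s a| * f a = ∑' a : {a | s a = 1}, f a + ∑' a : {a | s a = -1}, f a := by
  rw [tsum_subtype, tsum_subtype, ← (hf.indicator _).tsum_add (hf.indicator _)]
  refine tsum_congr fun a => ?_
  rcases hs a with h | h | h <;> norm_num [Set.indicator, h]

lemma tsum_mul_eq_sub (hs : ∀ a, s a = -1 ∨ s a = 0 ∨ s a = 1) (hf : Summable f) :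
    ∑' a, s a * f a = ∑' a : {a | s a = 1}, f a - ∑' a : {a | s a = -1}, f a := by
  rw [tsum_subtype, tsum_subtype, ← (hf.indicator _).tsum_sub (hf.indicator _)]
  refine tsum_congr fun a => ?_
  rcases hs a with h | h | h <;> norm_num [Set.indicator, h]

end SignSplitting

lemma tsum_primes_setOf (P : ℕ → Prop) (f : ℕ → ℝ) :
    ∑' p : {p : Nat.Primes | P p}, f ((p : Nat.Primes) : ℕ) =
      ∑' p : {p : ℕ | p.Prime ∧ P p}, f p :=
  (Equiv.subtypeSubtypeEquivSubtypeInter _ P).tsum_eq fun p => f p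

section PrimeSigns

variable {s f : ℕ → ℝ}

lemma tsum_primes_abs_mul_eq_add (hs : ∀ n, s n = -1 ∨ s n = 0 ∨ s n = 1)
    (hf : Summable fun p : Nat.Primes => f p) :
    ∑' p : Nat.Primes, |s p| * f p =
      ∑' p : {p : ℕ | p.Prime ∧ s p = 1}, f p + ∑' p : {p : ℕ | p.Prime ∧ s p = -1}, f p := by
  rw [tsum_abs_mul_eq_add (s := fun p : Nat.Primes => s p) (fun p => hs p) hf,
    tsum_primes_setOf (s · = 1), tsum_primes_setOf (s · = -1)]

lemma tsum_primes_mul_eq_sub (hs : ∀ n, s n = -1 ∨ s n = 0 ∨ s n = 1)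
    (hf : Summable fun p : Nat.Primes => f p) :
    ∑' p : Nat.Primes, s p * f p =
      ∑' p : {p : ℕ | p.Prime ∧ s p = 1}, f p - ∑' p : {p : ℕ | p.Prime ∧ s p = -1}, f p := by
  rw [tsum_mul_eq_sub (s := fun p : Nat.Primes => s p) (fun p => hs p) hf,
    tsum_primes_setOf (s · = 1), tsum_primes_setOf (s · = -1)]

end PrimeSigns

lemma IsRegularPrimeSet.exists_tendsto_tsum_sub_log {S : Set ℕ} {δ : ℝ}
    (h : IsRegularPrimeSet S δ) :
    ∃ c, Tendsto (fun z : ℝ => ∑' p : S, ((p : ℕ) : ℝ) ^ (-z) - δ * Real.log (1 / (z - 1)))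
      (𝓝[>] 1) (𝓝 c) := by
  obtain ⟨-, U, g, hU, hsub, hg, hid⟩ := h
  have hcont : ContinuousAt g 1 :=
    (hg.differentiableAt (hU.mem_nhds (hsub (by simp)))).continuousAt
  have hofReal : Tendsto (fun z : ℝ => (z : ℂ)) (𝓝[>] 1) (𝓝 1) :=
    (Complex.continuous_ofReal.tendsto' 1 1 Complex.ofReal_one).mono_left nhdsWithin_le_nhds
  refine ⟨(g 1).re, ((Complex.continuous_re.tendsto _).comp (hcont.tendsto.comp hofReal)).congr' ?_⟩
  filter_upwards [self_mem_nhdsWithin] with z (hz : 1 < z)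
  have hterm (p : S) : ((p : ℕ) : ℂ) ^ (-(z : ℂ)) = ((((p : ℕ) : ℝ) ^ (-z) : ℝ) : ℂ) := by
    rw [Complex.ofReal_cpow (Nat.cast_nonneg _)]
    push_cast
    rfl
  have hlog : Complex.log (1 / ((z : ℂ) - 1)) = (Real.log (1 / (z - 1)) : ℂ) := by
    rw [Complex.ofReal_log (by simpa using hz.le)]
    push_cast
    rfl
  have hre := congrArg Complex.re (hid z (by simpa using hz))
  rw [tsum_congr hterm, ← Complex.ofReal_tsum, hlog] at hre
  simp only [Complex.ofReal_re, Complex.add_re, Complex.mul_re, Complex.ofReal_im, zero_mul,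
    sub_zero] at hre
  simp only [Function.comp_apply, hre, add_sub_cancel_left]

lemma hasDedekindDirichletDensity_signs {s : ℕ → ℝ} (hval : ∀ n, s n = -1 ∨ s n = 0 ∨ s n = 1)
    {A : ℝ} (habs : Tendsto (fun z : ℝ => (z - 1) * ∑' n, |s n| * (n : ℝ) ^ (-z)) (𝓝[>] 1) (𝓝 A))
    (hsigned : Tendsto (fun z : ℝ => (z - 1) * ∑' n, s n * (n : ℝ) ^ (-z)) (𝓝[>] 1) (𝓝 0)) :
    HasDedekindDirichletDensity {n : ℕ | s n ≠ 0} A ∧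
      HasDedekindDirichletDensity {n : ℕ | s n = 1} (A / 2) ∧
      HasDedekindDirichletDensity {n : ℕ | s n = -1} (A / 2) := by
  have hsum : Tendsto (fun z : ℝ => ((z - 1) * ∑' n, |s n| * (n : ℝ) ^ (-z) +
      (z - 1) * ∑' n, s n * (n : ℝ) ^ (-z)) / 2) (𝓝[>] 1) (𝓝 (A / 2)) := by
    simpa using (habs.add hsigned).div_const 2
  have hdiff : Tendsto (fun z : ℝ => ((z - 1) * ∑' n, |s n| * (n : ℝ) ^ (-z) -
      (z - 1) * ∑' n, s n * (n : ℝ) ^ (-z)) / 2) (𝓝[>] 1) (𝓝 (A / 2)) := by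
    simpa using (habs.sub hsigned).div_const 2
  refine ⟨habs.congr' ?_, hsum.congr' ?_, hdiff.congr' ?_⟩ <;>
    filter_upwards [self_mem_nhdsWithin] with z (hz : 1 < z)
  · rw [tsum_abs_mul_eq_tsum_ne_zero hval]
  all_goals
    have hf : Summable fun n : ℕ => (n : ℝ) ^ (-z) := Real.summable_nat_rpow.mpr (neg_lt_neg hz)
    rw [tsum_abs_mul_eq_add hval hf, tsum_mul_eq_sub hval hf]
    ring

theorem bruinier_kohnen_sign_equidistribution_general (s : ℕ → ℝ)
    (hone : s 1 = 1)
    (hmul : ∀ m n : ℕ, Nat.Coprime m n → s (m * n) = s m * s n)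
    (hval : ∀ n : ℕ, s n = -1 ∨ s n = 0 ∨ s n = 1)
    (hplus : IsRegularPrimeSet {p : ℕ | p.Prime ∧ s p = 1} (1 / 2))
    (hminus : IsRegularPrimeSet {p : ℕ | p.Prime ∧ s p = -1} (1 / 2)) :
    ∃ A : ℝ, 0 < A ∧
      HasDedekindDirichletDensity {n : ℕ | s n ≠ 0} A ∧
      HasDedekindDirichletDensity {n : ℕ | s n = 1} (A / 2) ∧
      HasDedekindDirichletDensity {n : ℕ | s n = -1} (A / 2) := by
  have hs (n : ℕ) : |s n| ≤ 1 := by rcases hval n with h | h | h <;> norm_num [h]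
  obtain ⟨cp, hcp⟩ := hplus.exists_tendsto_tsum_sub_log
  obtain ⟨cm, hcm⟩ := hminus.exists_tendsto_tsum_sub_log
  obtain ⟨A, hA, habs⟩ := exists_pos_tendsto_mul_tsum_rpow_neg (u := fun n => |s n|)
    (by simp [hone]) (fun m n h => by simp [hmul m n h, abs_mul]) (by simpa using hs)
    (fun n => abs_nonneg _) (c := cp + cm) ((hcp.add hcm).congr' (by
      filter_upwards [self_mem_nhdsWithin] with z (hz : 1 < z)
      rw [tsum_primes_abs_mul_eq_add (f := fun n : ℕ => (n : ℝ) ^ (-z)) hval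
        (summable_primes_rpow_neg hz)]
      ring))
  have hsigned := tendsto_mul_tsum_rpow_neg_zero hone hmul hs (C := cp - cm + 1) (by
    filter_upwards [self_mem_nhdsWithin, (hcp.sub hcm).eventually_lt_const (lt_add_one _)]
      with z (hz : 1 < z) hlt
    rw [tsum_primes_mul_eq_sub (f := fun n : ℕ => (n : ℝ) ^ (-z)) hval
      (summable_primes_rpow_neg hz)]
    linarith)
  exact ⟨A, hA, hasDedekindDirichletDensity_signs hval habs hsigned⟩

/-- Corollary 5.2 (abstracted): let `s : ℕ → ℝ` be multiplicative with values in
`{-1, 0, 1}` such that `{p : s(p) = 1}` and `{p : s(p) = -1}` are regular sets of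
primes of Dirichlet density `1/2` and `{p : s(p) = 0}` is a regular set of primes of
Dirichlet density `0`. Then `{n : s(n) = 1}` and `{n : s(n) = -1}` have equal positive
Dedekind–Dirichlet densities, each half of the Dedekind–Dirichlet density of
`{n : s(n) ≠ 0}`, which exists and is positive. -/
theorem bruinier_kohnen_sign_equidistribution (s : ℕ → ℝ)
    (hone : s 1 = 1)
    (hmul : ∀ m n : ℕ, Nat.Coprime m n → s (m * n) = s m * s n)
    (hval : ∀ n : ℕ, s n = -1 ∨ s n = 0 ∨ s n = 1)
    (hplus : IsRegularPrimeSet {p : ℕ | p.Prime ∧ s p = 1} (1 / 2))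
    (hminus : IsRegularPrimeSet {p : ℕ | p.Prime ∧ s p = -1} (1 / 2))
    (hzero : IsRegularPrimeSet {p : ℕ | p.Prime ∧ s p = 0} 0) :
    ∃ A : ℝ, 0 < A ∧
      HasDedekindDirichletDensity {n : ℕ | s n ≠ 0} A ∧
      HasDedekindDirichletDensity {n : ℕ | s n = 1} (A / 2) ∧
      HasDedekindDirichletDensity {n : ℕ | s n = -1} (A / 2) :=
  bruinier_kohnen_sign_equidistribution_general s hone hmul hval hplus hminus
end

section
/- Let t : ℕ → ℝ be a multiplicative arithmetic function taking values in {0, 1}, and suppose that {p prime : t(p) = 0} is a regular set of primes of Dirichlet density 0. Let T(z) := ∑_{n=1}^{∞} t(n)·n^{−z} for Re z > 1. Then the quotient A(z) := T(z)/ζ(z) extends to a holomorphic function on an open neighborhood of the closed half-plane {z ∈ ℂ : Re z ≥ 1}, its value A(1) at z = 1 is positive, and the set {n ∈ ℕ : t(n) = 1} has Dedekind–Dirichlet density equal to A(1). -/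
open Filter Set

/-!
For a prime `p` let `G_p(z) = (1 - p^{-z}) ∑ₖ t(pᵏ) p^{-kz}` be the Euler factor of `T` divided
by that of `ζ`, so that `T/ζ = ∏ₚ G_p` for `Re z > 1`. Multiplying by `1 - p^{-z}` turns the
Euler factor into a power series in `p^{-z}` with coefficients `t(pᵏ⁺¹) - t(pᵏ)`, of modulus at
most `1` because `t` takes values in `[0, 1]`; hence
`G_p(z) = 1 - (1 - t(p)) p^{-z} + O(p^{-2 Re z})`. For `p ≥ 3` and `Re z > 3/4` this gives
`log G_p(z) + (1 - t(p)) p^{-z} = O(p^{-3/2})`, so these terms sum to a holomorphic function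
there, while for `Re z > 1` the sum `∑ₚ (1 - t(p)) p^{-z}` over the zero set of `t` is the
holomorphic function `g` provided by regularity of density `0`. Therefore
`T/ζ = G_2 · exp (∑_{p ≥ 3} (log G_p + (1 - t(p)) p^{-z}) + (1 - t(2)) 2^{-z} - g)`,
which is holomorphic on a neighbourhood of `Re z ≥ 1`; the prime `2` stays outside the logarithm
because `|2^{-z}|` reaches `1/2` on `Re z = 1`.

Since `ζ` has residue `1` at `1`, `(x - 1) ∑_{t(n) = 1} n^{-x} = (x - 1) ζ(x) A(x) → A(1)` as
`x → 1⁺`, so `A(1)` is real and nonnegative; it is nonzero because `G_2(1) = ½ ∑ₖ t(2ᵏ) 2^{-k} ≥ ½`.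
-/

open Complex Topology

section PowerSeries

variable {c : ℕ → ℂ} {x : ℂ}

lemma summable_mul_pow_of_norm_le_one (hc : ∀ k, ‖c k‖ ≤ 1) (hx : ‖x‖ < 1) :
    Summable fun k => c k * x ^ k :=
  .of_norm_bounded (summable_geometric_of_lt_one (norm_nonneg x) hx) fun k => by
    rw [norm_mul, norm_pow]
    exact mul_le_of_le_one_left (by positivity) (hc k)

lemma norm_tsum_mul_pow_add_le (hc : ∀ k, ‖c k‖ ≤ 1) (hx : ‖x‖ < 1) (m : ℕ) :
    ‖∑' k, c k * x ^ (k + m)‖ ≤ ‖x‖ ^ m / (1 - ‖x‖) := by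
  refine tsum_of_norm_bounded (g := fun k => ‖x‖ ^ m * ‖x‖ ^ k) ?_ fun k => ?_
  · simpa [div_eq_mul_inv] using
      (hasSum_geometric_of_lt_one (norm_nonneg x) hx).mul_left (‖x‖ ^ m)
  · calc ‖c k * x ^ (k + m)‖ = ‖c k‖ * (‖x‖ ^ m * ‖x‖ ^ k) := by
          rw [norm_mul, norm_pow, pow_add, mul_comm (‖x‖ ^ k)]
      _ ≤ ‖x‖ ^ m * ‖x‖ ^ k := mul_le_of_le_one_left (by positivity) (hc k)

lemma one_sub_mul_tsum_mul_pow (hc : ∀ k, ‖c k‖ ≤ 1) (hx : ‖x‖ < 1) :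
    (1 - x) * ∑' k, c k * x ^ k
      = c 0 + (c 1 - c 0) * x + ∑' k, (c (k + 2) - c (k + 1)) * x ^ (k + 2) := by
  have hs := summable_mul_pow_of_norm_le_one hc hx
  have hs₁ : Summable fun k => c (k + 1) * x ^ (k + 2) := by
    have := ((summable_nat_add_iff (f := fun k => c k * x ^ k) 1).mpr hs).mul_left x
    exact this.congr fun k => by ring
  have hs₂ : Summable fun k => c (k + 2) * x ^ (k + 2) :=
    (summable_nat_add_iff (f := fun k => c k * x ^ k) 2).mpr hs
  have hxs : x * ∑' k, c k * x ^ k = c 0 * x + ∑' k, c (k + 1) * x ^ (k + 2) := by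
    rw [← tsum_mul_left, (hs.mul_left x).tsum_eq_zero_add]
    congr 1
    · ring
    · exact tsum_congr fun k => by ring
  rw [sub_mul, one_mul, hxs, ← hs.sum_add_tsum_nat_add 2]
  simp only [Finset.sum_range_succ, Finset.sum_range_zero, sub_mul, hs₂.tsum_sub hs₁]
  ring

end PowerSeries

lemma norm_ofReal_le_one_of_mem_Icc {a : ℝ} (ha : a ∈ Icc 0 1) : ‖(a : ℂ)‖ ≤ 1 := by
  rw [norm_real, Real.norm_of_nonneg ha.1]
  exact ha.2

lemma norm_ofReal_sub_le_one_of_mem_Icc {a b : ℝ} (ha : a ∈ Icc 0 1) (hb : b ∈ Icc 0 1) :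
    ‖(a : ℂ) - b‖ ≤ 1 := by
  rw [← ofReal_sub, norm_real, Real.norm_eq_abs, abs_sub_le_iff]
  constructor <;> linarith [ha.1, ha.2, hb.1, hb.2]

noncomputable def eulerFactor (t : ℕ → ℝ) (p : ℕ) (z : ℂ) : ℂ :=
  ∑' k, (t (p ^ k) : ℂ) * ((p : ℂ) ^ (-z)) ^ k

noncomputable def normalizedEulerFactor (t : ℕ → ℝ) (p : ℕ) (z : ℂ) : ℂ :=
  (1 - (p : ℂ) ^ (-z)) * eulerFactor t p z

section EulerFactor

variable {t : ℕ → ℝ} {p : ℕ} {z : ℂ}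

lemma norm_natCast_cpow_neg_le (hp : 1 ≤ p) {σ : ℝ} (hσ : σ ≤ z.re) :
    ‖(p : ℂ) ^ (-z)‖ ≤ (p : ℝ) ^ (-σ) := by
  rw [norm_natCast_cpow_of_pos hp, neg_re]
  exact Real.rpow_le_rpow_of_exponent_le (by exact_mod_cast hp) (neg_le_neg hσ)

lemma norm_natCast_cpow_neg_le_four_ninths (hp : 3 ≤ p) (hz : 3 / 4 ≤ z.re) :
    ‖(p : ℂ) ^ (-z)‖ ≤ 4 / 9 := by
  have hp' : (3 : ℝ) ≤ p := by exact_mod_cast hp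
  refine (norm_natCast_cpow_neg_le (by omega) hz).trans ?_
  refine le_of_pow_le_pow_left₀ four_ne_zero (by norm_num) ?_
  rw [← Real.rpow_natCast, ← Real.rpow_mul (by linarith),
    show -(3 / 4 : ℝ) * (4 : ℕ) = -(3 : ℕ) by norm_num, Real.rpow_neg (by linarith),
    Real.rpow_natCast, inv_le_comm₀ (by positivity) (by positivity)]
  calc ((4 / 9 : ℝ) ^ 4)⁻¹ ≤ 3 ^ 3 := by norm_num
    _ ≤ (p : ℝ) ^ 3 := by gcongr

lemma differentiable_natCast_cpow_neg (hp : p ≠ 0) :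
    Differentiable ℂ fun z : ℂ => (p : ℂ) ^ (-z) :=
  differentiable_neg.const_cpow (.inl (Nat.cast_ne_zero.mpr hp))

lemma differentiableOn_eulerFactor (ht : ∀ n, t n ∈ Icc 0 1) (hp : 2 ≤ p) {σ : ℝ}
    (hσ : 0 < σ) : DifferentiableOn ℂ (eulerFactor t p) {z | σ < z.re} := by
  have hb : (p : ℝ) ^ (-σ) < 1 :=
    Real.rpow_lt_one_of_one_lt_of_neg (by exact_mod_cast hp) (by linarith)
  refine differentiableOn_tsum_of_summable_norm
    (summable_geometric_of_lt_one (by positivity) hb) (fun k => ?_)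
    (isOpen_lt continuous_const continuous_re) fun k w hw => ?_
  · exact ((differentiable_natCast_cpow_neg (by omega)).pow k).const_mul _ |>.differentiableOn
  · rw [norm_mul, norm_pow]
    exact (mul_le_of_le_one_left (by positivity) (norm_ofReal_le_one_of_mem_Icc (ht _))).trans
      (pow_le_pow_left₀ (norm_nonneg _) (norm_natCast_cpow_neg_le (by omega) hw.le) k)

lemma differentiableOn_normalizedEulerFactor (ht : ∀ n, t n ∈ Icc 0 1)
    (hp : 2 ≤ p) {σ : ℝ} (hσ : 0 < σ) :
    DifferentiableOn ℂ (normalizedEulerFactor t p) {z | σ < z.re} :=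
  ((differentiable_natCast_cpow_neg (by omega)).const_sub 1).differentiableOn.mul
    (differentiableOn_eulerFactor ht hp hσ)

lemma norm_normalizedEulerFactor_sub_le (ht : ∀ n, t n ∈ Icc 0 1) (hone : t 1 = 1)
    (hx : ‖(p : ℂ) ^ (-z)‖ < 1) :
    ‖normalizedEulerFactor t p z - (1 - (1 - t p) * (p : ℂ) ^ (-z))‖
      ≤ ‖(p : ℂ) ^ (-z)‖ ^ 2 / (1 - ‖(p : ℂ) ^ (-z)‖) := by
  rw [normalizedEulerFactor, eulerFactor,
    one_sub_mul_tsum_mul_pow (fun k => norm_ofReal_le_one_of_mem_Icc (ht _)) hx]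
  simp only [pow_zero, pow_one, hone, ofReal_one]
  convert norm_tsum_mul_pow_add_le
    (fun k => norm_ofReal_sub_le_one_of_mem_Icc (ht (p ^ (k + 2))) (ht (p ^ (k + 1)))) hx 2 using 2
  ring

lemma norm_normalizedEulerFactor_sub_one_le (ht : ∀ n, t n ∈ Icc 0 1) (hone : t 1 = 1)
    (hx : ‖(p : ℂ) ^ (-z)‖ < 1) :
    ‖normalizedEulerFactor t p z - 1‖ ≤ ‖(p : ℂ) ^ (-z)‖ / (1 - ‖(p : ℂ) ^ (-z)‖) := by
  set a := ‖(p : ℂ) ^ (-z)‖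
  have h₁ : ‖((1 - t p : ℝ) : ℂ) * (p : ℂ) ^ (-z)‖ ≤ a := by
    rw [norm_mul]
    exact mul_le_of_le_one_left (norm_nonneg _)
      (norm_ofReal_le_one_of_mem_Icc ⟨by linarith [(ht p).2], by linarith [(ht p).1]⟩)
  calc ‖normalizedEulerFactor t p z - 1‖
      = ‖(normalizedEulerFactor t p z - (1 - (1 - t p) * (p : ℂ) ^ (-z)))
          + -(((1 - t p : ℝ) : ℂ) * (p : ℂ) ^ (-z))‖ := by congr 1; push_cast; ring
    _ ≤ a ^ 2 / (1 - a) + a := by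
        grw [norm_add_le, norm_neg, norm_normalizedEulerFactor_sub_le ht hone hx, h₁]
    _ = a / (1 - a) := by field_simp [(by linarith : 1 - a ≠ 0)]; ring

lemma normalizedEulerFactor_ne_zero (ht : ∀ n, t n ∈ Icc 0 1) (hone : t 1 = 1) (hp : 2 ≤ p)
    (hz : 1 < z.re) : normalizedEulerFactor t p z ≠ 0 := by
  have hp' : (2 : ℝ) ≤ p := by exact_mod_cast hp
  have hx : ‖(p : ℂ) ^ (-z)‖ < 1 / 2 := by
    rw [norm_natCast_cpow_of_pos (by omega), neg_re]
    calc (p : ℝ) ^ (-z.re) < (p : ℝ) ^ (-1 : ℝ) :=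
          Real.rpow_lt_rpow_of_exponent_lt (by linarith) (by linarith)
      _ ≤ 1 / 2 := by rw [Real.rpow_neg_one, one_div]; exact inv_anti₀ two_pos hp'
  have h := norm_normalizedEulerFactor_sub_one_le ht hone (hx.trans one_half_lt_one)
  intro h0
  rw [h0, zero_sub, norm_neg, norm_one, le_div_iff₀ (by linarith)] at h
  linarith

lemma norm_normalizedEulerFactor_sub_one_le_of_three_le (ht : ∀ n, t n ∈ Icc 0 1)
    (hone : t 1 = 1) (hp : 3 ≤ p) (hz : 3 / 4 ≤ z.re) :
    ‖normalizedEulerFactor t p z - 1‖ ≤ 9 / 5 * ‖(p : ℂ) ^ (-z)‖ := by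
  have ha := norm_natCast_cpow_neg_le_four_ninths hp hz
  refine (norm_normalizedEulerFactor_sub_one_le ht hone (by linarith)).trans ?_
  rw [div_le_iff₀ (by linarith)]
  nlinarith [norm_nonneg ((p : ℂ) ^ (-z))]

lemma re_normalizedEulerFactor_pos (ht : ∀ n, t n ∈ Icc 0 1) (hone : t 1 = 1) (hp : 3 ≤ p)
    (hz : 3 / 4 ≤ z.re) : 0 < (normalizedEulerFactor t p z).re := by
  have h := (abs_re_le_norm _).trans
    (norm_normalizedEulerFactor_sub_one_le_of_three_le ht hone hp hz)
  have ha := norm_natCast_cpow_neg_le_four_ninths hp hz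
  rw [sub_re, one_re, abs_le] at h
  linarith [h.1]

lemma norm_log_normalizedEulerFactor_add_le (ht : ∀ n, t n ∈ Icc 0 1) (hone : t 1 = 1)
    (hp : 3 ≤ p) (hz : 3 / 4 ≤ z.re) :
    ‖log (normalizedEulerFactor t p z) + (1 - t p) * (p : ℂ) ^ (-z)‖
      ≤ 10 * ‖(p : ℂ) ^ (-z)‖ ^ 2 := by
  set a := ‖(p : ℂ) ^ (-z)‖
  set w := normalizedEulerFactor t p z - 1
  have ha := norm_natCast_cpow_neg_le_four_ninths hp hz
  have hw : ‖w‖ ≤ 9 / 5 * a := norm_normalizedEulerFactor_sub_one_le_of_three_le ht hone hp hz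
  have hlog : ‖log (1 + w) - w‖ ≤ 81 / 10 * a ^ 2 := by
    refine (norm_log_one_add_sub_self_le (by linarith)).trans ?_
    have hpos : 0 < 1 - ‖w‖ := by linarith
    have hinv : (1 - ‖w‖)⁻¹ ≤ 5 := by
      rw [inv_le_comm₀ hpos (by norm_num)]
      linarith
    have hw2 : ‖w‖ ^ 2 ≤ (9 / 5 * a) ^ 2 := by gcongr
    calc ‖w‖ ^ 2 * (1 - ‖w‖)⁻¹ / 2 ≤ (9 / 5 * a) ^ 2 * 5 / 2 := by gcongr
      _ = 81 / 10 * a ^ 2 := by ring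
  have hlin : ‖w + (1 - t p) * (p : ℂ) ^ (-z)‖ ≤ 9 / 5 * a ^ 2 := by
    calc ‖w + (1 - t p) * (p : ℂ) ^ (-z)‖
        = ‖normalizedEulerFactor t p z - (1 - (1 - t p) * (p : ℂ) ^ (-z))‖ := by
          congr 1; simp only [w]; ring
      _ ≤ a ^ 2 / (1 - a) := norm_normalizedEulerFactor_sub_le ht hone (by linarith)
      _ ≤ 9 / 5 * a ^ 2 := by
        rw [div_le_iff₀ (by linarith)]
        nlinarith [sq_nonneg a]
  calc ‖log (normalizedEulerFactor t p z) + (1 - t p) * (p : ℂ) ^ (-z)‖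
      = ‖(log (1 + w) - w) + (w + (1 - t p) * (p : ℂ) ^ (-z))‖ := by
        congr 1; simp only [w, add_sub_cancel]; ring
    _ ≤ 10 * a ^ 2 := by grw [norm_add_le, hlog, hlin]; linarith [sq_nonneg a]

lemma re_normalizedEulerFactor_one_pos (ht : ∀ n, t n ∈ Icc 0 1) (hone : t 1 = 1)
    (hp : 2 ≤ p) : 0 < (normalizedEulerFactor t p 1).re := by
  have hp' : (2 : ℝ) ≤ p := by exact_mod_cast hp
  have hx : (p : ℂ) ^ (-1 : ℂ) = (((p : ℝ)⁻¹ : ℝ) : ℂ) := by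
    rw [cpow_neg_one, ofReal_inv, ofReal_natCast]
  have hsum : HasSum (fun k => t (p ^ k) * ((p : ℝ)⁻¹) ^ k) (eulerFactor t p 1).re := by
    have h := hasSum_re (summable_mul_pow_of_norm_le_one
      (fun k => norm_ofReal_le_one_of_mem_Icc (ht (p ^ k))) (x := (p : ℂ) ^ (-1 : ℂ)) ?_).hasSum
    · simpa [eulerFactor, hx, ← ofReal_pow, -ofReal_inv] using h
    · rw [hx, norm_real, Real.norm_of_nonneg (by positivity)]
      exact inv_lt_one_of_one_lt₀ (by linarith)
  have hF : 1 ≤ (eulerFactor t p 1).re := by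
    simpa [hone] using le_hasSum hsum 0 fun k _ => mul_nonneg (ht _).1 (by positivity)
  have hG : normalizedEulerFactor t p 1 = ((1 - (p : ℝ)⁻¹ : ℝ) : ℂ) * eulerFactor t p 1 := by
    rw [normalizedEulerFactor, hx]
    push_cast
    ring
  rw [hG, re_ofReal_mul]
  have : (p : ℝ)⁻¹ < 1 := inv_lt_one_of_one_lt₀ (by linarith)
  nlinarith

end EulerFactor

noncomputable def oddPrimeLogTerm (t : ℕ → ℝ) (p : ℕ) (z : ℂ) : ℂ :=
  if p = 2 then 0 else log (normalizedEulerFactor t p z) + (1 - t p) * (p : ℂ) ^ (-z)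

noncomputable def eulerQuotient (t : ℕ → ℝ) (g : ℂ → ℂ) (z : ℂ) : ℂ :=
  normalizedEulerFactor t 2 z *
    exp (∑' p : Nat.Primes, oddPrimeLogTerm t p z + (1 - t 2) * ((2 : ℕ) : ℂ) ^ (-z) - g z)

section EulerQuotient

variable {t : ℕ → ℝ} {p : ℕ} {z : ℂ}

lemma norm_oddPrimeLogTerm_le (ht : ∀ n, t n ∈ Icc 0 1) (hone : t 1 = 1) (hp : p.Prime)
    (hz : 3 / 4 ≤ z.re) : ‖oddPrimeLogTerm t p z‖ ≤ 10 * (p : ℝ) ^ (-(3 / 2 : ℝ)) := by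
  unfold oddPrimeLogTerm
  split_ifs with h2
  · rw [norm_zero]
    positivity
  refine (norm_log_normalizedEulerFactor_add_le ht hone (hp.two_le.lt_of_ne' h2) hz).trans ?_
  have hx := norm_natCast_cpow_neg_le hp.one_le hz
  rw [show -(3 / 2 : ℝ) = -(3 / 4) * (2 : ℕ) by norm_num,
    Real.rpow_mul_natCast (Nat.cast_nonneg p)]
  gcongr

lemma differentiableOn_oddPrimeLogTerm (ht : ∀ n, t n ∈ Icc 0 1) (hone : t 1 = 1)
    (hp : p.Prime) : DifferentiableOn ℂ (oddPrimeLogTerm t p) {z | 3 / 4 < z.re} := by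
  by_cases h2 : p = 2
  · exact (differentiableOn_const 0).congr fun z _ => if_pos h2
  have hG : ∀ z ∈ {z : ℂ | 3 / 4 < z.re}, normalizedEulerFactor t p z ∈ slitPlane :=
    fun z hz => .inl (re_normalizedEulerFactor_pos ht hone (hp.two_le.lt_of_ne' h2) hz.le)
  refine DifferentiableOn.congr ?_ fun z _ => if_neg h2
  exact ((differentiableOn_normalizedEulerFactor ht hp.two_le (by norm_num)).clog hG).add
    ((differentiable_natCast_cpow_neg hp.ne_zero).differentiableOn.const_mul _)

lemma summable_oddPrimeLogTerm_bound :
    Summable fun p : Nat.Primes => 10 * ((p : ℕ) : ℝ) ^ (-(3 / 2 : ℝ)) :=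
  (Nat.Primes.summable_rpow.mpr (by norm_num)).mul_left 10

lemma differentiableOn_eulerQuotient (ht : ∀ n, t n ∈ Icc 0 1) (hone : t 1 = 1)
    {g : ℂ → ℂ} {U : Set ℂ} (hg : DifferentiableOn ℂ g U) :
    DifferentiableOn ℂ (eulerQuotient t g) (U ∩ {z | 3 / 4 < z.re}) := by
  have hsum : DifferentiableOn ℂ (fun z => ∑' p : Nat.Primes, oddPrimeLogTerm t p z)
      {z | 3 / 4 < z.re} :=
    differentiableOn_tsum_of_summable_norm summable_oddPrimeLogTerm_bound
      (fun p => differentiableOn_oddPrimeLogTerm ht hone p.2)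
      (isOpen_lt continuous_const continuous_re)
      fun p z hz => norm_oddPrimeLogTerm_le ht hone p.2 hz.le
  refine ((differentiableOn_normalizedEulerFactor ht le_rfl (by norm_num)).mono
    inter_subset_right).mul (DifferentiableOn.cexp ?_)
  exact ((hsum.mono inter_subset_right).add ((differentiable_natCast_cpow_neg two_ne_zero)
    |>.differentiableOn.const_mul _)).sub (hg.mono inter_subset_left)

lemma hasProd_normalizedEulerFactor (ht : ∀ n, t n ∈ Icc 0 1) (hone : t 1 = 1)
    {g : ℂ → ℂ} (hz : 1 < z.re)
    (hg : HasSum (fun p : Nat.Primes => (1 - t p) * ((p : ℕ) : ℂ) ^ (-z)) (g z)) :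
    HasProd (fun p : Nat.Primes => normalizedEulerFactor t p z) (eulerQuotient t g z) := by
  set l₂ := log (normalizedEulerFactor t 2 z) + (1 - t 2) * ((2 : ℕ) : ℂ) ^ (-z)
  have hodd : HasSum (fun p : Nat.Primes => oddPrimeLogTerm t p z)
      (∑' p : Nat.Primes, oddPrimeLogTerm t p z) :=
    (summable_oddPrimeLogTerm_bound.of_norm_bounded
      fun p => norm_oddPrimeLogTerm_le ht hone p.2 (by linarith)).hasSum
  have hlog : HasSum (fun p : Nat.Primes => log (normalizedEulerFactor t p z))
      (∑' p : Nat.Primes, oddPrimeLogTerm t p z + l₂ - g z) := by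
    have h₂ : HasSum (fun p : Nat.Primes => if (p : ℕ) = 2 then l₂ else 0) l₂ := by
      simpa using hasSum_single (f := fun p : Nat.Primes => if (p : ℕ) = 2 then l₂ else 0)
        ⟨2, Nat.prime_two⟩ fun p hp => if_neg fun h => hp (Subtype.ext h)
    refine ((hodd.add h₂).sub hg).congr_fun fun p => ?_
    by_cases h2 : (p : ℕ) = 2
    · simp only [oddPrimeLogTerm, h2, if_true, l₂]
      ring
    · simp only [oddPrimeLogTerm, h2, if_false]
      ring
  convert hlog.cexp using 1
  · funext p
    exact (exp_log (normalizedEulerFactor_ne_zero ht hone p.2.two_le hz)).symm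
  · rw [eulerQuotient, show ∑' p : Nat.Primes, oddPrimeLogTerm t p z + l₂ - g z
      = log (normalizedEulerFactor t 2 z) + (∑' p : Nat.Primes, oddPrimeLogTerm t p z
        + (1 - t 2) * ((2 : ℕ) : ℂ) ^ (-z) - g z) by ring, exp_add,
      exp_log (normalizedEulerFactor_ne_zero ht hone le_rfl hz)]

lemma summable_natCast_cpow_neg (hz : 1 < z.re) : Summable fun n : ℕ => (n : ℂ) ^ (-z) := by
  simpa [one_div, cpow_neg] using summable_one_div_nat_cpow.mpr hz

lemma hasProd_eulerFactor (ht : ∀ n, t n ∈ Icc 0 1) (hone : t 1 = 1)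
    (hmul : ∀ m n : ℕ, Nat.Coprime m n → t (m * n) = t m * t n) (hz : 1 < z.re) :
    HasProd (fun p : Nat.Primes => eulerFactor t p z) (∑' n : ℕ, (t n : ℂ) * (n : ℂ) ^ (-z)) := by
  have hz₀ : -z ≠ 0 := neg_ne_zero.mpr fun h => by simp [h] at hz; linarith
  refine (EulerProduct.eulerProduct_hasProd (by simp [hone])
    (fun {m n} hmn => by rw [hmul m n hmn, Nat.cast_mul, natCast_mul_natCast_cpow]; push_cast; ring)
    ((summable_natCast_cpow_neg hz).norm.of_nonneg_of_le (fun _ => norm_nonneg _) fun n => ?_)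
    (by simp [zero_cpow hz₀])).congr_fun fun p => tsum_congr fun k => ?_
  · rw [norm_mul]
    exact mul_le_of_le_one_left (norm_nonneg _) (norm_ofReal_le_one_of_mem_Icc (ht n))
  · rw [Nat.cast_pow, ← natCast_cpow_natCast_mul, cpow_nat_mul]

lemma riemannZeta_mul_eulerQuotient (ht : ∀ n, t n ∈ Icc 0 1) (hone : t 1 = 1)
    (hmul : ∀ m n : ℕ, Nat.Coprime m n → t (m * n) = t m * t n) {g : ℂ → ℂ} (hz : 1 < z.re)
    (hg : HasSum (fun p : Nat.Primes => (1 - t p) * ((p : ℕ) : ℂ) ^ (-z)) (g z)) :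
    riemannZeta z * eulerQuotient t g z = ∑' n : ℕ, (t n : ℂ) * (n : ℂ) ^ (-z) := by
  refine ((riemannZeta_eulerProduct_hasProd hz).mul
    (hasProd_normalizedEulerFactor ht hone hz hg)).unique
    ((hasProd_eulerFactor ht hone hmul hz).congr_fun fun p => ?_)
  rw [normalizedEulerFactor, inv_mul_cancel_left₀
    (left_ne_zero_of_mul (normalizedEulerFactor_ne_zero ht hone p.2.two_le hz))]

lemma eulerQuotient_one_ne_zero (ht : ∀ n, t n ∈ Icc 0 1) (hone : t 1 = 1) (g : ℂ → ℂ) :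
    eulerQuotient t g 1 ≠ 0 :=
  mul_ne_zero (fun h => (re_normalizedEulerFactor_one_pos ht hone le_rfl).ne' (by rw [h, zero_re]))
    (exp_ne_zero _)

lemma hasSum_primes_one_sub_mul_cpow (hval : ∀ n, t n = 0 ∨ t n = 1) (hz : 1 < z.re) {a : ℂ}
    (h : ∑' p : {p : ℕ | p.Prime ∧ t p = 0}, ((p : ℕ) : ℂ) ^ (-z) = a) :
    HasSum (fun p : Nat.Primes => (1 - t p) * ((p : ℕ) : ℂ) ^ (-z)) a := by
  set S := {p : ℕ | p.Prime ∧ t p = 0}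
  have hS : HasSum (S.indicator fun n : ℕ => (n : ℂ) ^ (-z)) a :=
    hasSum_subtype_iff_indicator.mp (h ▸ ((summable_natCast_cpow_neg hz).subtype S).hasSum)
  refine ((hasSum_subtype_iff_of_support_subset (s := {p : ℕ | p.Prime})
    ((support_indicator_subset).trans fun p hp => hp.1)).mpr hS).congr_fun fun p => ?_
  rcases hval p with h0 | h1
  · simp [S, h0, indicator_of_mem (show (p : ℕ) ∈ S from ⟨p.2, h0⟩)]
  · simp [S, h1]

end EulerQuotient

lemma ofReal_tsum_rpow_setOf_eq_one {t : ℕ → ℝ} (hval : ∀ n, t n = 0 ∨ t n = 1) (x : ℝ) :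
    ((∑' n : {n | t n = 1}, ((n : ℕ) : ℝ) ^ (-x) : ℝ) : ℂ)
      = ∑' n : ℕ, (t n : ℂ) * (n : ℂ) ^ (-(x : ℂ)) := by
  rw [tsum_subtype {n | t n = 1} fun n : ℕ => (n : ℝ) ^ (-x), ofReal_tsum]
  refine tsum_congr fun n => ?_
  rcases hval n with h | h <;> simp [h, ofReal_cpow (Nat.cast_nonneg n)]

lemma tendsto_ofReal_nhdsGT_one : Tendsto (fun x : ℝ => (x : ℂ)) (𝓝[>] 1) (𝓝[≠] 1) := by
  refine tendsto_nhdsWithin_iff.mpr ⟨?_, ?_⟩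
  · simpa using (continuous_ofReal.tendsto 1).mono_left nhdsWithin_le_nhds
  · filter_upwards [self_mem_nhdsWithin] with x (hx : 1 < x)
    simpa using hx.ne'

lemma tendsto_sub_one_mul_of_riemannZeta_mul {A T : ℂ → ℂ} (hA : ContinuousAt A 1)
    (hT : ∀ x : ℝ, 1 < x → riemannZeta x * A x = T x) :
    Tendsto (fun x : ℝ => ((x : ℂ) - 1) * T x) (𝓝[>] 1) (𝓝 (A 1)) := by
  have h := (riemannZeta_residue_one.comp tendsto_ofReal_nhdsGT_one).mul
    (hA.tendsto.comp (tendsto_ofReal_nhdsGT_one.mono_right nhdsWithin_le_nhds))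
  rw [one_mul] at h
  refine h.congr' ?_
  filter_upwards [self_mem_nhdsWithin] with x (hx : 1 < x)
  simp only [Function.comp_apply, mul_assoc, hT x hx]

lemma hasDedekindDirichletDensity_of_tendsto_ofReal {S : Set ℕ} {a : ℂ}
    (h : Tendsto (fun x : ℝ => (((x - 1) * ∑' n : S, ((n : ℕ) : ℝ) ^ (-x) : ℝ) : ℂ))
      (𝓝[>] 1) (𝓝 a)) :
    a.im = 0 ∧ 0 ≤ a.re ∧ HasDedekindDirichletDensity S a.re := by
  have hre : HasDedekindDirichletDensity S a.re :=
    ((continuous_re.tendsto a).comp h).congr fun x => ofReal_re _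
  have him : Tendsto (fun _ : ℝ => (0 : ℝ)) (𝓝[>] 1) (𝓝 a.im) :=
    ((continuous_im.tendsto a).comp h).congr fun x => ofReal_im _
  refine ⟨(tendsto_nhds_unique tendsto_const_nhds him).symm, ge_of_tendsto hre ?_, hre⟩
  filter_upwards [self_mem_nhdsWithin] with x (hx : 1 < x)
  exact mul_nonneg (by linarith) (tsum_nonneg fun n => by positivity)

/-- Intermediate claim in the proof of Corollary 5.2: let `t : ℕ → ℝ` be multiplicative
with values in `{0, 1}` such that `{p : t(p) = 0}` is a regular set of primes of
Dirichlet density `0`, and let `T(z) = ∑ t(n) n^{-z}` for `Re z > 1`. Then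
`A(z) = T(z)/ζ(z)` extends to a holomorphic function on an open neighbourhood of the
closed half-plane `Re z ≥ 1`, its value at `z = 1` is a positive real number, and
`{n : t(n) = 1}` has Dedekind–Dirichlet density `A(1)`. -/
theorem nonvanishing_set_dedekindDirichlet_density (t : ℕ → ℝ)
    (hone : t 1 = 1)
    (hmul : ∀ m n : ℕ, Nat.Coprime m n → t (m * n) = t m * t n)
    (hval : ∀ n : ℕ, t n = 0 ∨ t n = 1)
    (hzero : IsRegularPrimeSet {p : ℕ | p.Prime ∧ t p = 0} 0) :
    ∃ (U : Set ℂ) (A : ℂ → ℂ), IsOpen U ∧ {z : ℂ | 1 ≤ z.re} ⊆ U ∧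
      DifferentiableOn ℂ A U ∧
      (∀ z : ℂ, 1 < z.re →
        A z = (∑' n : ℕ, (t n : ℂ) * (n : ℂ) ^ (-z)) / riemannZeta z) ∧
      (A 1).im = 0 ∧ 0 < (A 1).re ∧
      HasDedekindDirichletDensity {n : ℕ | t n = 1} (A 1).re := by
  obtain ⟨-, U, g, hU, hUsub, hg, hgsum⟩ := hzero
  have ht : ∀ n, t n ∈ Icc (0 : ℝ) 1 := fun n => by rcases hval n with h | h <;> simp [h]
  set A := eulerQuotient t g
  have hζA (z : ℂ) (hz : 1 < z.re) :
      riemannZeta z * A z = ∑' n : ℕ, (t n : ℂ) * (n : ℂ) ^ (-z) :=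
    riemannZeta_mul_eulerQuotient ht hone hmul hz
      (hasSum_primes_one_sub_mul_cpow hval hz (by simpa using hgsum z hz))
  have hV : IsOpen (U ∩ {z : ℂ | 3 / 4 < z.re}) :=
    hU.inter (isOpen_lt continuous_const continuous_re)
  have hsub : {z : ℂ | 1 ≤ z.re} ⊆ U ∩ {z : ℂ | 3 / 4 < z.re} :=
    fun z (hz : 1 ≤ z.re) => ⟨hUsub hz, show 3 / 4 < z.re by linarith⟩
  have hA : DifferentiableOn ℂ A (U ∩ {z : ℂ | 3 / 4 < z.re}) :=
    differentiableOn_eulerQuotient ht hone hg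
  have hlim : Tendsto
      (fun x : ℝ => (((x - 1) * ∑' n : {n | t n = 1}, ((n : ℕ) : ℝ) ^ (-x) : ℝ) : ℂ))
      (𝓝[>] 1) (𝓝 (A 1)) := by
    refine (tendsto_sub_one_mul_of_riemannZeta_mul
      (T := fun z => ∑' n : ℕ, (t n : ℂ) * (n : ℂ) ^ (-z))
      (hA.differentiableAt (hV.mem_nhds (hsub (by simp)))).continuousAt
      fun x hx => hζA x (by simpa using hx)).congr fun x => ?_
    rw [ofReal_mul, ofReal_tsum_rpow_setOf_eq_one hval]
    push_cast
    rfl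
  obtain ⟨him, hre, hdens⟩ := hasDedekindDirichletDensity_of_tendsto_ofReal hlim
  refine ⟨_, A, hV, hsub, hA, fun z hz => ?_, him, ?_, hdens⟩
  · rw [← hζA z hz, mul_div_cancel_left₀ _ (riemannZeta_ne_zero_of_one_le_re hz.le)]
  · exact hre.lt_of_ne fun h => eulerQuotient_one_ne_zero ht hone g (Complex.ext h.symm him)
end

section
/- Let α > 0, C > 0 and let g : [2, ∞) → ℝ be a function satisfying |g(x)| ≤ C·x^{1−α}/(log x − 4) for all x > 55. Then the function f(z) := z·∫_{2}^{∞} g(x)·x^{−z−1} dx is well-defined and holomorphic on the open half-plane {z ∈ ℂ : Re z > 1 − α/2}; in particular it is holomorphic on an open neighborhood of the closed half-plane {z ∈ ℂ : Re z ≥ 1}. -/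
open Filter Set

/-!
Extending `g` by zero below `2`, the integral is the Mellin transform of this extension at `-z`.
The extension vanishes near `0`, is bounded on compacts (the bound for `x > 55` is finite because
`e⁴ < 55`), and is `O(x^{1-α})` at infinity since eventually `log x - 4 ≥ 1`. Hence its Mellin
transform converges and is holomorphic on `Re(-z) < α - 1`, which contains `Re z > 1 - α/2`.
-/

open MeasureTheory Asymptotics Topology

section IndicatorIoi

variable {E : Type*} [NormedAddCommGroup E] {f : ℝ → E} {a : ℝ}

theorem locallyIntegrableOn_indicator_Ioi (hf : ∀ c, IntegrableOn f (Ioc a c)) :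
    LocallyIntegrableOn ((Ioi a).indicator f) (Ioi 0) := by
  rw [locallyIntegrableOn_iff isOpen_Ioi.isLocallyClosed]
  intro K _ hK
  obtain ⟨c, hc⟩ := hK.bddAbove
  rw [integrableOn_indicator_iff measurableSet_Ioi]
  exact (hf c).mono_set fun x hx => ⟨hx.1, hc hx.2⟩

theorem indicator_Ioi_isBigO_nhdsGT_zero (ha : 0 < a) (f : ℝ → E) (b : ℝ) :
    (Ioi a).indicator f =O[𝓝[>] 0] (· ^ (-b)) := by
  refine EventuallyEq.trans_isBigO ?_ (isBigO_zero _ _)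
  filter_upwards [Ioo_mem_nhdsGT ha] with x hx
  exact indicator_of_notMem (not_lt.2 hx.2.le) f

theorem indicator_Ioi_isBigO_atTop {b : ℝ} (hf_top : f =O[atTop] (· ^ (-b))) :
    (Ioi a).indicator f =O[atTop] (· ^ (-b)) := by
  refine EventuallyEq.trans_isBigO ?_ hf_top
  filter_upwards [eventually_gt_atTop a] with x hx
  exact indicator_of_mem hx f

variable [NormedSpace ℂ E]

theorem mellin_indicator_Ioi (ha : 0 ≤ a) (f : ℝ → E) (s : ℂ) :
    mellin ((Ioi a).indicator f) s = ∫ x in Ioi a, (x : ℂ) ^ (s - 1) • f x := by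
  rw [mellin, ← indicator_smul, setIntegral_indicator measurableSet_Ioi,
    inter_eq_self_of_subset_right (Ioi_subset_Ioi ha)]

variable {b : ℝ} (ha : 0 < a) (hf : ∀ c, IntegrableOn f (Ioc a c))
  (hf_top : f =O[atTop] (· ^ (-b)))
include ha hf hf_top

theorem integrableOn_Ioi_cpow_smul_of_isBigO_rpow {s : ℂ} (hs : s.re < b) :
    IntegrableOn (fun x : ℝ => (x : ℂ) ^ (s - 1) • f x) (Ioi a) := by
  have := mellinConvergent_of_isBigO_rpow (locallyIntegrableOn_indicator_Ioi hf)
    (indicator_Ioi_isBigO_atTop hf_top) hs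
    (indicator_Ioi_isBigO_nhdsGT_zero ha f (s.re - 1)) (sub_one_lt _)
  rwa [MellinConvergent, ← indicator_smul, integrableOn_indicator_iff measurableSet_Ioi,
    inter_eq_self_of_subset_left (Ioi_subset_Ioi ha.le)] at this

theorem differentiableOn_integral_Ioi_cpow_smul_of_isBigO_rpow :
    DifferentiableOn ℂ (fun s : ℂ => ∫ x in Ioi a, (x : ℂ) ^ (s - 1) • f x) {s | s.re < b} := by
  intro s hs
  simp_rw [← mellin_indicator_Ioi ha.le]
  exact (mellin_differentiableAt_of_isBigO_rpow (locallyIntegrableOn_indicator_Ioi hf)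
    (indicator_Ioi_isBigO_atTop hf_top) hs
    (indicator_Ioi_isBigO_nhdsGT_zero ha f (s.re - 1)) (sub_one_lt _)).differentiableWithinAt

end IndicatorIoi

theorem four_lt_log_fiftyFive : 4 < Real.log 55 := by
  rw [Real.lt_log_iff_exp_lt (by norm_num), show (4 : ℝ) = (4 : ℕ) * 1 by norm_num,
    Real.exp_nat_mul]
  calc Real.exp 1 ^ 4 < 2.7182818286 ^ 4 :=
        pow_lt_pow_left₀ Real.exp_one_lt_d9 (Real.exp_pos 1).le (by norm_num)
    _ < 55 := by norm_num

section GrowthBound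

variable {g : ℝ → ℝ} {α C : ℝ}

theorem integrableOn_Ioc_of_abs_le_rpow_div_log (hα : 0 ≤ α) (hC : 0 ≤ C) (hmeas : Measurable g)
    {C' : ℝ} (hC' : ∀ x ∈ Icc (2 : ℝ) 55, |g x| ≤ C')
    (hg : ∀ x : ℝ, 55 < x → |g x| ≤ C * x ^ (1 - α) / (Real.log x - 4)) (c : ℝ) :
    IntegrableOn (fun x => (g x : ℂ)) (Ioc 2 c) := by
  refine Measure.integrableOn_of_bounded measure_Ioc_lt_top.ne
    (Complex.measurable_ofReal.comp hmeas).aestronglyMeasurable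
    (M := max C' (C * c / (Real.log 55 - 4))) ?_
  filter_upwards [ae_restrict_mem measurableSet_Ioc] with x ⟨h2x, hxc⟩
  rw [Complex.norm_real, Real.norm_eq_abs]
  rcases le_or_gt x 55 with h55 | h55
  · exact le_max_of_le_left (hC' x ⟨h2x.le, h55⟩)
  · have hpow : x ^ (1 - α) ≤ c := calc
      x ^ (1 - α) ≤ x ^ (1 : ℝ) := Real.rpow_le_rpow_of_exponent_le (by linarith) (by linarith)
      _ = x := Real.rpow_one x
      _ ≤ c := hxc
    have hlog : Real.log 55 - 4 ≤ Real.log x - 4 := by gcongr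
    refine le_max_of_le_right ((hg x h55).trans ?_)
    exact div_le_div₀ (mul_nonneg hC (by linarith)) (mul_le_mul_of_nonneg_left hpow hC)
      (sub_pos.2 four_lt_log_fiftyFive) hlog

theorem isBigO_rpow_of_abs_le_rpow_div_log (hC : 0 ≤ C)
    (hg : ∀ x : ℝ, 55 < x → |g x| ≤ C * x ^ (1 - α) / (Real.log x - 4)) :
    g =O[atTop] (· ^ (-(α - 1))) := by
  refine isBigO_iff.2 ⟨C, ?_⟩
  filter_upwards [eventually_gt_atTop 55, Real.tendsto_log_atTop.eventually_ge_atTop 5]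
    with x h55 hlog
  rw [neg_sub, Real.norm_eq_abs, Real.norm_of_nonneg (by positivity)]
  exact (hg x h55).trans (div_le_self (by positivity) (by linarith))

end GrowthBound

/-- Analytic step in the proof of Proposition 2.2: let `α, C > 0` and let
`g : [2,∞) → ℝ` be a (measurable, locally bounded) function satisfying
`|g(x)| ≤ C x^{1-α} / (log x - 4)` for all `x > 55`. Then
`f(z) = z ∫_2^∞ g(x) x^{-z-1} dx` is well defined and holomorphic on the open
half-plane `Re z > 1 - α/2`, which is an open neighbourhood of the closed half-plane
`Re z ≥ 1`. -/
theorem integral_transform_holomorphic (α C : ℝ) (hα : 0 < α) (hC : 0 < C)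
    (g : ℝ → ℝ) (hmeas : Measurable g)
    (hloc : ∃ C' : ℝ, ∀ x ∈ Set.Icc (2 : ℝ) 55, |g x| ≤ C')
    (hg : ∀ x : ℝ, 55 < x → |g x| ≤ C * x ^ (1 - α) / (Real.log x - 4)) :
    (∀ z : ℂ, 1 - α / 2 < z.re →
      MeasureTheory.IntegrableOn
        (fun x : ℝ => (g x : ℂ) * (x : ℂ) ^ (-z - 1)) (Set.Ioi (2 : ℝ))) ∧
    DifferentiableOn ℂ
      (fun z : ℂ => z * ∫ x in Set.Ioi (2 : ℝ), (g x : ℂ) * (x : ℂ) ^ (-z - 1))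
      {z : ℂ | 1 - α / 2 < z.re} ∧
    IsOpen {z : ℂ | 1 - α / 2 < z.re} ∧
    {z : ℂ | 1 ≤ z.re} ⊆ {z : ℂ | 1 - α / 2 < z.re} := by
  obtain ⟨C', hC'⟩ := hloc
  have hint := integrableOn_Ioc_of_abs_le_rpow_div_log hα.le hC.le hmeas hC' hg
  have htop := Complex.isBigO_ofReal_left.2 (isBigO_rpow_of_abs_le_rpow_div_log hC.le hg)
  have hre : ∀ z : ℂ, 1 - α / 2 < z.re → (-z).re < α - 1 := fun z hz => by
    rw [Complex.neg_re]; linarith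
  have hcomm : ∀ z : ℂ, (fun x : ℝ => (g x : ℂ) * (x : ℂ) ^ (-z - 1)) =
      fun x : ℝ => (x : ℂ) ^ (-z - 1) • (g x : ℂ) := fun z => funext fun _ => mul_comm _ _
  refine ⟨fun z hz => ?_, ?_, isOpen_lt continuous_const Complex.continuous_re,
    fun z (hz : 1 ≤ z.re) => show 1 - α / 2 < z.re by linarith⟩
  · rw [hcomm]
    exact integrableOn_Ioi_cpow_smul_of_isBigO_rpow two_pos hint htop (hre z hz)
  · simp_rw [hcomm]
    exact differentiableOn_id.mul
      ((differentiableOn_integral_Ioi_cpow_smul_of_isBigO_rpow two_pos hint htop).comp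
        (differentiableOn_neg _) fun z hz => hre z hz)
end
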